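/- Let L_main be C² with M-Lipschitz Hessian and g_main = ∇L_main(θ) ≠ 0, g_aux = ∇L_aux(θ). Suppose there exists θ* with ∇L_main(θ*) = 0 and ‖θ - θ*‖ ≤ c ‖g_main‖. If the Bloop direction d = g_main + λ π(g_aux; g_main) (λ > 0) satisfies ‖d‖ ≤ ε, then with v = (⟨g_aux, g_main⟩/‖g_main‖²)(θ - θ*) we have ‖g_aux - ∇²L_main(θ) v‖ ≤ (λ⁻¹ + M c² ‖g_aux‖ / 2) ε. -/

import Mathlib

/-!
Write `α = ⟪g_aux, g_main⟫ / ‖g_main‖²`. Since `g_main ⟂ π(g_aux; g_main)`, Pythagoras applied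
to `d = g_main + λ π` gives `‖g_main‖ ≤ ε` and `‖π‖ ≤ λ⁻¹ ε`. With `H = ∇²L_main(θ)` the residual
splits as `g_aux - H v = π + α (g_main - H (θ - θ*))`, and since `∇L_main(θ*) = 0` the second
bracket is the remainder of the first-order Taylor expansion of `∇L_main` at `θ`, of size at most
`M/2 ‖θ - θ*‖² ≤ M c²/2 ‖g_main‖²`; together with `|α| ‖g_main‖ ≤ ‖g_aux‖` this bounds the second
term by `M c² ‖g_aux‖ ε / 2`.
-/

open RealInnerProductSpace

section Taylor

variable {E F : Type*} [NormedAddCommGroup E] [NormedSpace ℝ E] [NormedAddCommGroup F]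
  [NormedSpace ℝ F]

theorem norm_sub_sub_fderiv_apply_le_of_lipschitz_fderiv {f : E → F} {M : ℝ} {a : E}
    (hf : Differentiable ℝ f) (hLip : ∀ x, ‖fderiv ℝ f x - fderiv ℝ f a‖ ≤ M * ‖x - a‖) (b : E) :
    ‖f b - f a - fderiv ℝ f a (b - a)‖ ≤ M / 2 * ‖b - a‖ ^ 2 := by
  set u := b - a
  let h : ℝ → F := fun t => f (a + t • u) - f a - t • fderiv ℝ f a u
  let h' : ℝ → F := fun t => fderiv ℝ f (a + t • u) u - fderiv ℝ f a u
  have hasDerivAt_h : ∀ t, HasDerivAt h (h' t) t := by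
    intro t
    have hline : HasDerivAt (fun t : ℝ => a + t • u) u t := by
      simpa using ((hasDerivAt_id t).smul_const u).const_add a
    exact (((hf _).hasFDerivAt.comp_hasDerivAt t hline).sub_const (f a)).sub
      (by simpa using (hasDerivAt_id t).smul_const (fderiv ℝ f a u))
  have bound : ∀ t ∈ Set.Ico (0 : ℝ) 1, ‖h' t‖ ≤ M * ‖u‖ ^ 2 * t := by
    intro t ht
    calc ‖h' t‖ = ‖(fderiv ℝ f (a + t • u) - fderiv ℝ f a) u‖ := rfl
      _ ≤ ‖fderiv ℝ f (a + t • u) - fderiv ℝ f a‖ * ‖u‖ := ContinuousLinearMap.le_opNorm _ _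
      _ ≤ M * ‖t • u‖ * ‖u‖ := by
        gcongr
        simpa using hLip (a + t • u)
      _ = M * ‖u‖ ^ 2 * t := by
        rw [norm_smul, Real.norm_of_nonneg ht.1]
        ring
  have key := image_norm_le_of_norm_deriv_right_le_deriv_boundary
    (f := h) (B := fun t => M / 2 * ‖u‖ ^ 2 * t ^ 2) (B' := fun t => M * ‖u‖ ^ 2 * t)
    (fun t _ => (hasDerivAt_h t).continuousAt.continuousWithinAt)
    (fun t _ => (hasDerivAt_h t).hasDerivWithinAt) (by simp [h])
    (fun t => ((hasDerivAt_pow 2 t).const_mul (M / 2 * ‖u‖ ^ 2)).congr_deriv (by norm_num; ring))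
    bound (Set.right_mem_Icc.2 zero_le_one)
  simpa [h, u] using key

end Taylor

theorem ContDiff.differentiable_gradient {F : Type*} [NormedAddCommGroup F] [InnerProductSpace ℝ F]
    [CompleteSpace F] {f : F → ℝ} (hf : ContDiff ℝ 2 f) : Differentiable ℝ (gradient f) :=
  ((InnerProductSpace.toDual ℝ F).symm.toContinuousLinearEquiv.contDiff.comp
    (hf.fderiv_right (m := 1) (by norm_num))).differentiable one_ne_zero

section Rejection

variable {F : Type*} [NormedAddCommGroup F] [InnerProductSpace ℝ F]

/-- The paper's `π(u; w)`. -/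
noncomputable def rejection (u w : F) : F := u - (⟪u, w⟫ / ‖w‖ ^ 2) • w

theorem inner_rejection_right (u w : F) : ⟪w, rejection u w⟫ = 0 := by
  rcases eq_or_ne w 0 with rfl | hw
  · simp
  have : ‖w‖ ≠ 0 := norm_ne_zero_iff.2 hw
  rw [rejection, inner_sub_right, real_inner_smul_right, real_inner_self_eq_norm_sq,
    real_inner_comm]
  field_simp
  ring

theorem abs_inner_div_norm_sq_mul_norm_le (u w : F) : |⟪u, w⟫ / ‖w‖ ^ 2| * ‖w‖ ≤ ‖u‖ := by
  rcases eq_or_ne w 0 with rfl | hw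
  · simp
  have : 0 < ‖w‖ := norm_pos_iff.2 hw
  rw [abs_div, abs_of_nonneg (sq_nonneg ‖w‖), div_mul_eq_mul_div, div_le_iff₀ (by positivity)]
  calc |⟪u, w⟫| * ‖w‖ ≤ ‖u‖ * ‖w‖ * ‖w‖ := by gcongr; exact abs_real_inner_le_norm u w
    _ = ‖u‖ * ‖w‖ ^ 2 := by ring

theorem norm_le_norm_add_of_inner_eq_zero {x y : F} (h : ⟪x, y⟫ = 0) : ‖x‖ ≤ ‖x + y‖ := by
  rw [mul_self_le_mul_self_iff (norm_nonneg _) (norm_nonneg _),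
    norm_add_sq_eq_norm_sq_add_norm_sq_real h]
  nlinarith [mul_self_nonneg ‖y‖]

end Rejection

theorem norm_sub_apply_smul_le_of_norm_add_smul_rejection_le {E F : Type*} [NormedAddCommGroup E]
    [NormedSpace ℝ E] [NormedAddCommGroup F] [InnerProductSpace ℝ F] (H : E →L[ℝ] F)
    {g a : F} {δ : E} {M c lam ε : ℝ} (hM : 0 ≤ M) (hlam : 0 < lam)
    (htaylor : ‖g - H δ‖ ≤ M / 2 * ‖δ‖ ^ 2) (herr : ‖δ‖ ≤ c * ‖g‖)
    (hd : ‖g + lam • rejection a g‖ ≤ ε) :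
    ‖a - H ((⟪a, g⟫ / ‖g‖ ^ 2) • δ)‖ ≤ (lam⁻¹ + M * c ^ 2 * ‖a‖ / 2) * ε := by
  set α := ⟪a, g⟫ / ‖g‖ ^ 2 with hα
  have horth : ⟪g, lam • rejection a g⟫ = 0 := by
    rw [real_inner_smul_right, inner_rejection_right, mul_zero]
  have hg : ‖g‖ ≤ ε := (norm_le_norm_add_of_inner_eq_zero horth).trans hd
  have hrej : ‖rejection a g‖ ≤ lam⁻¹ * ε := by
    have := norm_le_norm_add_of_inner_eq_zero ((real_inner_comm _ _).trans horth)
    rw [add_comm, norm_smul, Real.norm_of_nonneg hlam.le] at this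
    exact (le_inv_mul_iff₀ hlam).2 (this.trans hd)
  have hremainder : ‖α • (g - H δ)‖ ≤ M * c ^ 2 * ‖a‖ / 2 * ε :=
    calc ‖α • (g - H δ)‖ = |α| * ‖g - H δ‖ := by rw [norm_smul, Real.norm_eq_abs]
      _ ≤ |α| * (M / 2 * (c * ‖g‖) ^ 2) := by gcongr; exact htaylor.trans (by gcongr)
      _ = (|α| * ‖g‖) * (M * c ^ 2 / 2 * ‖g‖) := by ring
      _ ≤ ‖a‖ * (M * c ^ 2 / 2 * ε) := by
        gcongr
        exact abs_inner_div_norm_sq_mul_norm_le a g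
      _ = M * c ^ 2 * ‖a‖ / 2 * ε := by ring
  calc ‖a - H (α • δ)‖ = ‖rejection a g + α • (g - H δ)‖ := by
        rw [rejection, ← hα, map_smul, smul_sub]
        abel_nf
    _ ≤ lam⁻¹ * ε + M * c ^ 2 * ‖a‖ / 2 * ε := (norm_add_le _ _).trans (add_le_add hrej hremainder)
    _ = (lam⁻¹ + M * c ^ 2 * ‖a‖ / 2) * ε := by ring

theorem bloop_near_stationary_general (p : ℕ)
    (Lmain : EuclideanSpace ℝ (Fin p) → ℝ) (M c lam ε : ℝ)
    (hC2 : ContDiff ℝ 2 Lmain)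
    (hLip : ∀ x y, ‖fderiv ℝ (gradient Lmain) x - fderiv ℝ (gradient Lmain) y‖ ≤ M * ‖x - y‖)
    (hlam : 0 < lam)
    (θ θs : EuclideanSpace ℝ (Fin p))
    (gmain gaux : EuclideanSpace ℝ (Fin p))
    (hgmain : gmain = gradient Lmain θ) (hgm : gmain ≠ 0)
    (hcrit : gradient Lmain θs = 0) (herr : ‖θ - θs‖ ≤ c * ‖gmain‖)
    (d : EuclideanSpace ℝ (Fin p))
    (hd : d = gmain + lam • (gaux - (⟪gaux, gmain⟫ / ‖gmain‖ ^ 2) • gmain))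
    (hdsmall : ‖d‖ ≤ ε)
    (v : EuclideanSpace ℝ (Fin p))
    (hv : v = (⟪gaux, gmain⟫ / ‖gmain‖ ^ 2) • (θ - θs)) :
    ‖gaux - fderiv ℝ (gradient Lmain) θ v‖ ≤ (lam⁻¹ + M * c ^ 2 * ‖gaux‖ / 2) * ε := by
  have hθ : θ ≠ θs := by
    rintro rfl
    exact hgm (hgmain.trans hcrit)
  have hM : 0 ≤ M := nonneg_of_mul_nonneg_left ((norm_nonneg _).trans (hLip θ θs))
    (norm_pos_iff.2 (sub_ne_zero.2 hθ))
  have htaylor : ‖gmain - fderiv ℝ (gradient Lmain) θ (θ - θs)‖ ≤ M / 2 * ‖θ - θs‖ ^ 2 :=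
    calc ‖gmain - fderiv ℝ (gradient Lmain) θ (θ - θs)‖
        = ‖gradient Lmain θs - gradient Lmain θ - fderiv ℝ (gradient Lmain) θ (θs - θ)‖ := by
          rw [hcrit, ← hgmain, ← neg_sub θ θs, map_neg, ← norm_neg]
          abel_nf
      _ ≤ M / 2 * ‖θs - θ‖ ^ 2 := norm_sub_sub_fderiv_apply_le_of_lipschitz_fderiv
          hC2.differentiable_gradient (fun x => hLip x θ) θs
      _ = M / 2 * ‖θ - θs‖ ^ 2 := by rw [norm_sub_rev]
  subst hd hv
  exact norm_sub_apply_smul_le_of_norm_add_smul_rejection_le _ hM hlam htaylor herr hdsmall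

theorem bloop_near_stationary (p : ℕ)
    (Lmain : EuclideanSpace ℝ (Fin p) → ℝ) (M c lam ε : ℝ)
    (hC2 : ContDiff ℝ 2 Lmain)
    (hLip : ∀ x y, ‖fderiv ℝ (gradient Lmain) x - fderiv ℝ (gradient Lmain) y‖ ≤ M * ‖x - y‖)
    (hc : 0 < c) (hlam : 0 < lam) (hε : 0 < ε)
    (θ θs : EuclideanSpace ℝ (Fin p))
    (gmain gaux : EuclideanSpace ℝ (Fin p))
    (hgmain : gmain = gradient Lmain θ) (hgm : gmain ≠ 0)
    (hcrit : gradient Lmain θs = 0) (herr : ‖θ - θs‖ ≤ c * ‖gmain‖)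
    (d : EuclideanSpace ℝ (Fin p))
    (hd : d = gmain + lam • (gaux - (⟪gaux, gmain⟫ / ‖gmain‖ ^ 2) • gmain))
    (hdsmall : ‖d‖ ≤ ε)
    (v : EuclideanSpace ℝ (Fin p))
    (hv : v = (⟪gaux, gmain⟫ / ‖gmain‖ ^ 2) • (θ - θs)) :
    ‖gaux - fderiv ℝ (gradient Lmain) θ v‖ ≤ (lam⁻¹ + M * c ^ 2 * ‖gaux‖ / 2) * ε :=
  bloop_near_stationary_general p Lmain M c lam ε hC2 hLip hlam θ θs gmain gaux hgmain hgm hcrit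
    herr d hd hdsmall v hv
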